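/- There is a constant C such that for every λ > 0 and all symmetric 2×2 matrices A, B: |g_λ(A) - g_λ(B)| ≤ C|A-B|·(1 + (|A|+|B|)/√λ). -/

import Mathlib

open Matrix

/-- Eigenvalue τ₁ of a symmetric 2×2 real matrix (larger root). -/
noncomputable def tau1 (ξ : Matrix (Fin 2) (Fin 2) ℝ) : ℝ :=
  ((ξ 0 0 + ξ 1 1) + Real.sqrt ((ξ 0 0 - ξ 1 1) ^ 2 + 4 * (ξ 0 1) ^ 2)) / 2

/-- Eigenvalue τ₂ of a symmetric 2×2 real matrix (smaller root). -/
noncomputable def tau2 (ξ : Matrix (Fin 2) (Fin 2) ℝ) : ℝ :=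
  ((ξ 0 0 + ξ 1 1) - Real.sqrt ((ξ 0 0 - ξ 1 1) ^ 2 + 4 * (ξ 0 1) ^ 2)) / 2

/-- ρ⁰(ξ) = |τ₁(ξ)| + |τ₂(ξ)|. -/
noncomputable def rho0 (ξ : Matrix (Fin 2) (Fin 2) ℝ) : ℝ := |tau1 ξ| + |tau2 ξ|

/-- Frobenius norm of a 2×2 matrix. -/
noncomputable def frob (ξ : Matrix (Fin 2) (Fin 2) ℝ) : ℝ :=
  Real.sqrt (∑ i, ∑ j, (ξ i j) ^ 2)

/-- The function g_λ. -/
noncomputable def gl (l : ℝ) (ξ : Matrix (Fin 2) (Fin 2) ℝ) : ℝ :=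
  if rho0 ξ ≤ Real.sqrt l then 2 * (rho0 ξ - |ξ.det| / Real.sqrt l)
  else (frob ξ) ^ 2 / Real.sqrt l + Real.sqrt l

/-!
Write `s = √λ`. For symmetric `ξ` we have `τ₁² + τ₂² = |ξ|²` and `τ₁ τ₂ = det ξ`, so
`ρ⁰(ξ)² = |ξ|² + 2 |det ξ|`, and the two branches of `g_λ` merge into
`g_λ(ξ) = s + (|ξ|² - ((s - ρ⁰(ξ))⁺)²) / s`.
The term `|ξ|²` changes by at most `|A - B| (|A| + |B|)`; since `(s - ρ⁰)⁺ ∈ [0, s]`, the cut-off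
term changes by at most `2 s |ρ⁰(A) - ρ⁰(B)|`. Finally `ρ⁰ = max (|tr ξ|, τ₁ - τ₂)` is
`2`-Lipschitz, both `tr ξ` and `τ₁ - τ₂` being norms of linear images of `ξ` of size at most `2|ξ|`.
Hence `C = 4`.
-/

attribute [local instance] Matrix.frobeniusNormedAddCommGroup

lemma abs_add_abs_eq_max_abs (a b : ℝ) : |a| + |b| = max |a + b| |a - b| := by
  grind [abs_of_nonneg, abs_of_nonpos]

lemma abs_max_sub_sq_sub_max_sub_sq_le {s x y : ℝ} (hs : 0 ≤ s) (hx : 0 ≤ x) (hy : 0 ≤ y) :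
    |max (s - x) 0 ^ 2 - max (s - y) 0 ^ 2| ≤ 2 * s * |x - y| := by
  have hxs : max (s - x) 0 ≤ s := max_le (by linarith) hs
  have hys : max (s - y) 0 ≤ s := max_le (by linarith) hs
  have hdiff : |max (s - x) 0 - max (s - y) 0| ≤ |x - y| := by
    simpa only [sub_sub_sub_cancel_left, abs_sub_comm y] using
      abs_max_sub_max_le_abs (s - x) (s - y) 0
  rw [sq_sub_sq, abs_mul, abs_of_nonneg (by positivity)]
  exact mul_le_mul (by linarith) hdiff (abs_nonneg _) (by positivity)

section

variable (ξ : Matrix (Fin 2) (Fin 2) ℝ)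

lemma frob_eq_norm : frob ξ = ‖ξ‖ := by
  rw [frobenius_norm_def, frob, Real.sqrt_eq_rpow]
  simp

lemma norm_sq_fin_two : ‖ξ‖ ^ 2 = ξ 0 0 ^ 2 + ξ 0 1 ^ 2 + ξ 1 0 ^ 2 + ξ 1 1 ^ 2 := by
  rw [← frob_eq_norm, frob, Real.sq_sqrt (by positivity)]
  simp only [Fin.sum_univ_two]
  ring

lemma abs_trace_le_two_mul_norm : |ξ.trace| ≤ 2 * ‖ξ‖ := by
  refine abs_le_of_sq_le_sq ?_ (by positivity)
  rw [trace_fin_two, mul_pow, norm_sq_fin_two]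
  nlinarith [sq_nonneg (ξ 0 0 - ξ 1 1), sq_nonneg (ξ 0 1), sq_nonneg (ξ 1 0)]

def discVec : EuclideanSpace ℝ (Fin 2) := !₂[ξ 0 0 - ξ 1 1, 2 * ξ 0 1]

lemma discVec_sub (A B : Matrix (Fin 2) (Fin 2) ℝ) :
    discVec (A - B) = discVec A - discVec B := by
  ext i
  fin_cases i <;>
    simp only [discVec, Matrix.sub_apply, PiLp.sub_apply, Fin.zero_eta, Fin.mk_one, cons_val_zero,
      cons_val_one, cons_val_fin_one] <;>
    ring

lemma norm_discVec_le : ‖discVec ξ‖ ≤ 2 * ‖ξ‖ := by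
  refine (EuclideanSpace.norm_eq _).trans_le (Real.sqrt_le_iff.2 ⟨by positivity, ?_⟩)
  simp only [discVec, Fin.sum_univ_two, Real.norm_eq_abs, sq_abs, mul_pow, norm_sq_fin_two,
    Matrix.cons_val_zero, Matrix.cons_val_one]
  nlinarith [sq_nonneg (ξ 0 0 + ξ 1 1), sq_nonneg (ξ 1 0)]

lemma tau1_add_tau2 : tau1 ξ + tau2 ξ = ξ.trace := by
  rw [tau1, tau2, trace_fin_two]; ring

lemma tau1_sub_tau2 : tau1 ξ - tau2 ξ = ‖discVec ξ‖ := by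
  rw [tau1, tau2, EuclideanSpace.norm_eq]
  simp only [discVec, Real.norm_eq_abs, sq_abs, Fin.sum_univ_two, cons_val_zero, cons_val_one,
    cons_val_fin_one, mul_pow]
  ring_nf

lemma rho0_eq_max : rho0 ξ = max |ξ.trace| ‖discVec ξ‖ := by
  rw [rho0, abs_add_abs_eq_max_abs, tau1_add_tau2, tau1_sub_tau2, abs_norm]

lemma rho0_nonneg : 0 ≤ rho0 ξ := by
  rw [rho0]; positivity

lemma abs_rho0_sub_rho0_le (A B : Matrix (Fin 2) (Fin 2) ℝ) :
    |rho0 A - rho0 B| ≤ 2 * ‖A - B‖ := by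
  rw [rho0_eq_max, rho0_eq_max]
  refine (abs_max_sub_max_le_max _ _ _ _).trans (max_le ?_ ?_)
  · refine (abs_abs_sub_abs_le_abs_sub _ _).trans ?_
    rw [← trace_sub]
    exact abs_trace_le_two_mul_norm _
  · refine (abs_norm_sub_norm_le _ _).trans ?_
    rw [← discVec_sub]
    exact norm_discVec_le _

variable {ξ}

lemma tau1_mul_tau2 (hξ : ξ.IsSymm) : tau1 ξ * tau2 ξ = ξ.det := by
  have hdisc := Real.sq_sqrt (by positivity : 0 ≤ (ξ 0 0 - ξ 1 1) ^ 2 + 4 * ξ 0 1 ^ 2)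
  rw [tau1, tau2, det_fin_two, hξ.apply 0 1]
  linear_combination (-1 / 4 : ℝ) * hdisc

lemma tau1_sq_add_tau2_sq (hξ : ξ.IsSymm) : tau1 ξ ^ 2 + tau2 ξ ^ 2 = ‖ξ‖ ^ 2 := by
  have hdisc := Real.sq_sqrt (by positivity : 0 ≤ (ξ 0 0 - ξ 1 1) ^ 2 + 4 * ξ 0 1 ^ 2)
  rw [tau1, tau2, norm_sq_fin_two, hξ.apply 0 1]
  linear_combination (1 / 2 : ℝ) * hdisc

lemma rho0_sq (hξ : ξ.IsSymm) : rho0 ξ ^ 2 = ‖ξ‖ ^ 2 + 2 * |ξ.det| := by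
  rw [rho0, ← tau1_sq_add_tau2_sq hξ, ← tau1_mul_tau2 hξ, add_sq, sq_abs, sq_abs, abs_mul]
  ring

lemma gl_eq {l : ℝ} (hl : 0 < l) (hξ : ξ.IsSymm) :
    gl l ξ = √l + (‖ξ‖ ^ 2 - max (√l - rho0 ξ) 0 ^ 2) / √l := by
  have hs : 0 < √l := Real.sqrt_pos.2 hl
  rw [gl, frob_eq_norm]
  split_ifs with h
  · rw [max_eq_left (by linarith)]
    field_simp
    linear_combination rho0_sq hξ
  · rw [max_eq_right (by linarith)]
    ring

lemma abs_gl_sub_gl_le {l : ℝ} (hl : 0 < l) {A B : Matrix (Fin 2) (Fin 2) ℝ}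
    (hA : A.IsSymm) (hB : B.IsSymm) :
    |gl l A - gl l B| ≤ ‖A - B‖ * (4 + (‖A‖ + ‖B‖) / √l) := by
  have hs : 0 < √l := Real.sqrt_pos.2 hl
  rw [gl_eq hl hA, gl_eq hl hB]
  set a := max (√l - rho0 A) 0
  set b := max (√l - rho0 B) 0
  have hnorm : |‖A‖ ^ 2 - ‖B‖ ^ 2| ≤ ‖A - B‖ * (‖A‖ + ‖B‖) := by
    rw [sq_sub_sq, abs_mul, abs_of_nonneg (by positivity), mul_comm]
    exact mul_le_mul_of_nonneg_right (abs_norm_sub_norm_le A B) (by positivity)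
  have hcut : |a ^ 2 - b ^ 2| ≤ 2 * √l * (2 * ‖A - B‖) :=
    (abs_max_sub_sq_sub_max_sub_sq_le hs.le (rho0_nonneg A) (rho0_nonneg B)).trans
      (by gcongr; exact abs_rho0_sub_rho0_le A B)
  calc _ = |((‖A‖ ^ 2 - ‖B‖ ^ 2) - (a ^ 2 - b ^ 2)) / √l| := by congr 1; ring
    _ = |(‖A‖ ^ 2 - ‖B‖ ^ 2) - (a ^ 2 - b ^ 2)| / √l := by rw [abs_div, abs_of_pos hs]
    _ ≤ (‖A - B‖ * (‖A‖ + ‖B‖) + 2 * √l * (2 * ‖A - B‖)) / √l := by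
        gcongr
        exact (abs_sub _ _).trans (add_le_add hnorm hcut)
    _ = ‖A - B‖ * (4 + (‖A‖ + ‖B‖) / √l) := by
        field_simp
        ring

end

theorem stmt5 :
    ∃ C : ℝ, 0 < C ∧ ∀ (l : ℝ), 0 < l → ∀ A B : Matrix (Fin 2) (Fin 2) ℝ,
      A.IsSymm → B.IsSymm →
      |gl l A - gl l B| ≤
        C * frob (A - B) * (1 + (frob A + frob B) / Real.sqrt l) := by
  refine ⟨4, by norm_num, fun l hl A B hA hB => ?_⟩
  simp only [frob_eq_norm]
  have hratio : 0 ≤ (‖A‖ + ‖B‖) / √l := by positivity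
  nlinarith [abs_gl_sub_gl_le hl hA hB, norm_nonneg (A - B)]
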